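/- arXiv:1911.05272 — 2 statements merged into one kernel-verified Lean document; each statement's English description precedes it below -/
import Mathlib

section
/- For every real number a, the integral ∫₀^∞ x · erf(a x / √2) · exp(-x²/2) dx equals a / √(1 + a²). -/
/-! With `b = √(1 + a²)`, the function
`F x = (a / b) erf (b x / √2) - exp (-x² / 2) erf (a x / √2)` is a primitive of the integrand:
differentiating the second product produces a Gaussian term `exp (-(1 + a²) x² / 2)` that is
cancelled exactly by the derivative of the first summand. Since `F 0 = 0` and `F x → a / b` as
`x → ∞` (because `erf → 1` and `erf` is bounded), the integral equals `a / b`. -/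

open Real MeasureTheory Set Filter Topology

noncomputable def erf (z : ℝ) : ℝ := 2 / Real.sqrt π * ∫ u in (0:ℝ)..z, Real.exp (-u ^ 2)

lemma continuous_exp_neg_sq : Continuous fun u : ℝ => exp (-u ^ 2) := by
  fun_prop

lemma hasDerivAt_erf (z : ℝ) : HasDerivAt erf (2 / √π * exp (-z ^ 2)) z :=
  (intervalIntegral.integral_hasDerivAt_right (continuous_exp_neg_sq.intervalIntegrable _ _)
    continuous_exp_neg_sq.aestronglyMeasurable.stronglyMeasurableAtFilter
    continuous_exp_neg_sq.continuousAt).const_mul _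

@[fun_prop]
lemma continuous_erf : Continuous erf :=
  continuous_iff_continuousAt.mpr fun z => (hasDerivAt_erf z).continuousAt

lemma strictMono_erf : StrictMono erf :=
  strictMono_of_hasDerivAt_pos hasDerivAt_erf fun z => by positivity

@[simp]
lemma erf_zero : erf 0 = 0 := by simp [erf]

lemma erf_neg (z : ℝ) : erf (-z) = -erf z := by
  have h : ∫ u in (0:ℝ)..(-z), exp (-u ^ 2) = -∫ u in (0:ℝ)..z, exp (-u ^ 2) := by
    rw [intervalIntegral.integral_symm, ← neg_zero,
      ← intervalIntegral.integral_comp_neg (fun u => exp (-u ^ 2))]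
    simp only [neg_zero, neg_sq]
  rw [erf, erf, h, mul_neg]

lemma tendsto_erf_atTop : Tendsto erf atTop (𝓝 1) := by
  have h : Tendsto (fun z => ∫ u in (0:ℝ)..z, exp (-u ^ 2)) atTop
      (𝓝 (∫ u in Ioi (0:ℝ), exp (-u ^ 2))) :=
    intervalIntegral_tendsto_integral_Ioi 0
      (by simpa using (integrable_exp_neg_mul_sq one_pos).integrableOn) tendsto_id
  rw [show ∫ u in Ioi (0:ℝ), exp (-u ^ 2) = √π / 2 by simpa using integral_gaussian_Ioi 1] at h
  have hπ : (0:ℝ) < √π := sqrt_pos.mpr pi_pos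
  have := h.const_mul (2 / √π)
  rwa [show 2 / √π * (√π / 2) = 1 by field_simp] at this

lemma abs_erf_le_one (z : ℝ) : |erf z| ≤ 1 := by
  have hle : ∀ z, erf z ≤ 1 := strictMono_erf.monotone.ge_of_tendsto tendsto_erf_atTop
  refine abs_le.mpr ⟨?_, hle z⟩
  linarith [hle (-z), erf_neg z]

lemma hasDerivAt_erf_mul_div_sqrt_two (c x : ℝ) :
    HasDerivAt (fun x => erf (c * x / √2)) (2 / √π * exp (-(c ^ 2 * x ^ 2 / 2)) * (c / √2)) x := by
  have hinner : HasDerivAt (fun x : ℝ => c * x / √2) (c / √2) x := by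
    simpa using ((hasDerivAt_id x).const_mul c).div_const √2
  refine ((hasDerivAt_erf _).comp x hinner).congr_deriv ?_
  rw [div_pow, mul_pow, sq_sqrt zero_le_two]

noncomputable def erfGaussPrimitive (a x : ℝ) : ℝ :=
  a / √(1 + a ^ 2) * erf (√(1 + a ^ 2) * x / √2) - exp (-x ^ 2 / 2) * erf (a * x / √2)

@[simp]
lemma erfGaussPrimitive_zero (a : ℝ) : erfGaussPrimitive a 0 = 0 := by
  simp [erfGaussPrimitive]

lemma hasDerivAt_erfGaussPrimitive (a x : ℝ) :
    HasDerivAt (erfGaussPrimitive a) (x * erf (a * x / √2) * exp (-x ^ 2 / 2)) x := by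
  have hb : √(1 + a ^ 2) ^ 2 = 1 + a ^ 2 := sq_sqrt (by positivity)
  have hb0 : √(1 + a ^ 2) ≠ 0 := by positivity
  have hexp : exp (-x ^ 2 / 2) * exp (-(a ^ 2 * x ^ 2 / 2)) =
      exp (-(√(1 + a ^ 2) ^ 2 * x ^ 2 / 2)) := by
    rw [← exp_add, hb]; ring_nf
  have hgauss : HasDerivAt (fun x => exp (-x ^ 2 / 2)) (-x * exp (-x ^ 2 / 2)) x := by
    have hq : HasDerivAt (fun x : ℝ => -x ^ 2 / 2) (-x) x :=
      (((hasDerivAt_pow 2 x).neg).div_const 2).congr_deriv (by push_cast; ring)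
    exact hq.exp.congr_deriv (by ring)
  refine (((hasDerivAt_erf_mul_div_sqrt_two _ x).const_mul (a / √(1 + a ^ 2))).sub
    (hgauss.mul (hasDerivAt_erf_mul_div_sqrt_two a x))).congr_deriv ?_
  rw [← hexp]
  field_simp
  ring

lemma tendsto_erfGaussPrimitive_atTop (a : ℝ) :
    Tendsto (erfGaussPrimitive a) atTop (𝓝 (a / √(1 + a ^ 2))) := by
  have hscale : Tendsto (fun x => √(1 + a ^ 2) * x / √2) atTop atTop :=
    (tendsto_id.const_mul_atTop (by positivity)).atTop_div_const (by positivity)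
  have hgauss : Tendsto (fun x : ℝ => exp (-x ^ 2 / 2)) atTop (𝓝 0) := by
    have := tendsto_exp_neg_atTop_nhds_zero.comp
      ((tendsto_pow_atTop two_ne_zero).atTop_div_const (two_pos (α := ℝ)))
    simpa only [Function.comp_def, ← neg_div] using this
  have hdamped : Tendsto (fun x => exp (-x ^ 2 / 2) * erf (a * x / √2)) atTop (𝓝 0) := by
    refine squeeze_zero_norm (fun x => ?_) hgauss
    rw [norm_mul, norm_of_nonneg (exp_pos _).le]
    exact mul_le_of_le_one_right (exp_pos _).le (abs_erf_le_one _)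
  have := ((tendsto_erf_atTop.comp hscale).const_mul (a / √(1 + a ^ 2))).sub hdamped
  rwa [mul_one, sub_zero] at this

lemma integrable_mul_erf_mul_exp_neg_sq_div_two (a : ℝ) :
    Integrable fun x => x * erf (a * x / √2) * exp (-x ^ 2 / 2) := by
  refine (integrable_mul_exp_neg_mul_sq one_half_pos).mono
    (Continuous.aestronglyMeasurable (by fun_prop)) (ae_of_all _ fun x => ?_)
  rw [show -(1 / 2) * x ^ 2 = -x ^ 2 / 2 by ring, norm_mul, norm_mul, norm_mul]
  calc ‖x‖ * ‖erf (a * x / √2)‖ * ‖exp (-x ^ 2 / 2)‖ ≤ ‖x‖ * 1 * ‖exp (-x ^ 2 / 2)‖ := by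
        gcongr; exact abs_erf_le_one _
    _ = ‖x‖ * ‖exp (-x ^ 2 / 2)‖ := by rw [mul_one]

theorem stmt4 (a : ℝ) :
    ∫ x in Ioi (0 : ℝ), x * erf (a * x / Real.sqrt 2) * Real.exp (-x ^ 2 / 2) =
      a / Real.sqrt (1 + a ^ 2) := by
  rw [integral_Ioi_of_hasDerivAt_of_tendsto' (fun x _ => hasDerivAt_erfGaussPrimitive a x)
    (integrable_mul_erf_mul_exp_neg_sq_div_two a).integrableOn
    (tendsto_erfGaussPrimitive_atTop a), erfGaussPrimitive_zero, sub_zero]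
end

section
/- Let 0 < s < 1 and for x > 0 define M₁(s, x) := ((1 − s + s x²)/x) · erf( x √s / √(2(1 − s)) ) + √(2 s (1 − s) / π) · exp( − s x² / (2(1 − s)) ). Then ∫₀^∞ x · M₁(s, x) · exp(-x²/2) dx = √(2/π) · ( arctan(√(s/(1 − s))) + √(s(1 − s)) ). -/
/-!
With `a = √s / √(2(1 - s))`, the substitution `u = t x` gives
`erf (a x) = (2 / √π) ∫₀^a x e^{-t² x²} dt`, so the erf term of the integral becomes a double
integral of `(1 - s + s x²) x e^{-(t² + 1/2) x²}`. By Fubini the inner integrals are Gaussian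
moments, rational in `t`, with antiderivative `arctan (√2 t) / √2 + (s/2) t / (t² + 1/2)`; the
exponential term of `M₁` contributes a single Gaussian moment.
-/

open Real MeasureTheory Set

/-- Mean of the Brownian meander at time `s` conditioned to equal `x` at time 1. -/
noncomputable def M1 (s x : ℝ) : ℝ :=
  (1 - s + s * x ^ 2) / x * erf (x * Real.sqrt s / Real.sqrt (2 * (1 - s))) +
    Real.sqrt (2 * s * (1 - s) / π) * Real.exp (-(s * x ^ 2) / (2 * (1 - s)))

open Nat in
theorem integral_Ioi_odd_pow_mul_exp_neg_mul_sq {b : ℝ} (hb : 0 < b) (k : ℕ) :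
    ∫ x in Ioi (0 : ℝ), x ^ (2 * k + 1) * exp (-b * x ^ 2) = k ! / (2 * b ^ (k + 1)) := by
  have h := integral_rpow_mul_exp_neg_mul_rpow two_pos
    (by linarith [(2 * k + 1 : ℕ).cast_nonneg (α := ℝ)] : (-1 : ℝ) < (2 * k + 1 : ℕ)) hb
  have hexp : ((2 * k + 1 : ℕ) + 1 : ℝ) / 2 = k + 1 := by push_cast; ring
  rw [hexp, Gamma_nat_eq_factorial, neg_div, hexp, rpow_neg hb.le] at h
  norm_cast at h
  rw [h]
  field_simp

theorem integral_Ioi_mul_exp_neg_mul_sq {b : ℝ} (hb : 0 < b) :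
    ∫ x in Ioi (0 : ℝ), x * exp (-b * x ^ 2) = 1 / (2 * b) := by
  simpa using integral_Ioi_odd_pow_mul_exp_neg_mul_sq hb 0

theorem integrableOn_pow_mul_exp_neg_mul_sq {b : ℝ} (hb : 0 < b) (n : ℕ) :
    IntegrableOn (fun x : ℝ => x ^ n * exp (-b * x ^ 2)) (Ioi 0) := by
  simpa using integrableOn_rpow_mul_exp_neg_mul_sq hb
    (by linarith [n.cast_nonneg (α := ℝ)] : (-1 : ℝ) < n)

theorem integral_Ioi_quadratic_mul_exp_neg_mul_sq (q r : ℝ) {b : ℝ} (hb : 0 < b) :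
    ∫ x in Ioi (0 : ℝ), (q + r * x ^ 2) * (x * exp (-b * x ^ 2)) =
      q / (2 * b) + r / (2 * b ^ 2) := by
  have h3 : ∫ x in Ioi (0 : ℝ), x ^ 3 * exp (-b * x ^ 2) = 1 / (2 * b ^ 2) := by
    simpa using integral_Ioi_odd_pow_mul_exp_neg_mul_sq hb 1
  have hsplit : (fun x : ℝ => (q + r * x ^ 2) * (x * exp (-b * x ^ 2))) =
      fun x => q * (x ^ 1 * exp (-b * x ^ 2)) + r * (x ^ 3 * exp (-b * x ^ 2)) := by
    ext x; ring
  rw [hsplit, integral_add ((integrableOn_pow_mul_exp_neg_mul_sq hb 1).const_mul q)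
    ((integrableOn_pow_mul_exp_neg_mul_sq hb 3).const_mul r), integral_const_mul,
    integral_const_mul]
  simp only [pow_one, integral_Ioi_mul_exp_neg_mul_sq hb, h3]
  ring

theorem erf_mul_mul_exp_neg_mul_sq (a x b : ℝ) :
    erf (a * x) * exp (-b * x ^ 2) =
      2 / √π * ∫ t in (0 : ℝ)..a, x * exp (-(t ^ 2 + b) * x ^ 2) := by
  have hsub := intervalIntegral.mul_integral_comp_mul_right (a := 0) (b := a)
    (f := fun u => exp (-u ^ 2)) x
  rw [zero_mul] at hsub
  rw [erf, ← hsub, mul_assoc, ← intervalIntegral.integral_const_mul,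
    ← intervalIntegral.integral_mul_const]
  congr 1
  refine intervalIntegral.integral_congr fun t _ => ?_
  rw [mul_assoc, ← exp_add]
  ring_nf

noncomputable def erfKernel (q r b x t : ℝ) : ℝ :=
  (q + r * x ^ 2) * (x * exp (-(t ^ 2 + b) * x ^ 2))

theorem integrable_erfKernel (q r : ℝ) {b : ℝ} (hb : 0 < b) (a : ℝ) :
    Integrable (Function.uncurry (erfKernel q r b))
      ((volume.restrict (Ioi 0)).prod (volume.restrict (Ioc 0 a))) := by
  have hcont : Continuous (Function.uncurry (erfKernel q r b)) := by
    unfold erfKernel; fun_prop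
  have hdom : IntegrableOn (fun x => (|q| + |r| * x ^ 2) * (x * exp (-b * x ^ 2))) (Ioi 0) := by
    have hsplit : (fun x : ℝ => (|q| + |r| * x ^ 2) * (x * exp (-b * x ^ 2))) =
        fun x => |q| * (x ^ 1 * exp (-b * x ^ 2)) + |r| * (x ^ 3 * exp (-b * x ^ 2)) := by
      ext x; ring
    rw [hsplit]
    exact ((integrableOn_pow_mul_exp_neg_mul_sq hb 1).const_mul _).add
      ((integrableOn_pow_mul_exp_neg_mul_sq hb 3).const_mul _)
  refine Integrable.mono' (hdom.mul_prod (integrable_const (1 : ℝ)))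
    hcont.aestronglyMeasurable ?_
  rw [Measure.prod_restrict]
  filter_upwards [ae_restrict_mem (measurableSet_Ioi.prod measurableSet_Ioc)]
    with ⟨x, t⟩ ⟨hx, _⟩
  have hx : 0 < x := hx
  simp only [Function.uncurry_apply_pair, erfKernel, mul_one, norm_mul, Real.norm_eq_abs,
    abs_of_pos hx, abs_exp]
  gcongr
  · exact (abs_add_le _ _).trans (by rw [abs_mul, abs_of_nonneg (sq_nonneg x)])
  · nlinarith [mul_nonneg (sq_nonneg t) (sq_nonneg x)]

theorem integral_Ioi_integral_erfKernel (q r : ℝ) {b : ℝ} (hb : 0 < b) (a : ℝ) :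
    ∫ x in Ioi 0, ∫ t in Ioc 0 a, erfKernel q r b x t =
      ∫ t in Ioc 0 a, (q / (2 * (t ^ 2 + b)) + r / (2 * (t ^ 2 + b) ^ 2)) := by
  rw [integral_integral_swap (integrable_erfKernel q r hb a)]
  exact setIntegral_congr_fun measurableSet_Ioc fun t _ =>
    integral_Ioi_quadratic_mul_exp_neg_mul_sq q r (by positivity)

theorem quadratic_mul_erf_mul_exp_neg_mul_sq (q r x b : ℝ) {a : ℝ} (ha : 0 ≤ a) :
    (q + r * x ^ 2) * erf (a * x) * exp (-b * x ^ 2) =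
      2 / √π * ∫ t in Ioc 0 a, erfKernel q r b x t := by
  rw [mul_assoc, erf_mul_mul_exp_neg_mul_sq, ← intervalIntegral.integral_of_le ha,
    mul_left_comm, ← intervalIntegral.integral_const_mul]
  rfl

theorem integrableOn_quadratic_mul_erf_mul_exp_neg_mul_sq (q r : ℝ) {a b : ℝ} (ha : 0 ≤ a)
    (hb : 0 < b) :
    IntegrableOn (fun x => (q + r * x ^ 2) * erf (a * x) * exp (-b * x ^ 2)) (Ioi 0) := by
  simp_rw [quadratic_mul_erf_mul_exp_neg_mul_sq q r _ b ha]
  exact (integrable_erfKernel q r hb a).integral_prod_left.const_mul _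

theorem integral_Ioi_quadratic_mul_erf_mul_exp_neg_mul_sq (q r : ℝ) {a b : ℝ} (ha : 0 ≤ a)
    (hb : 0 < b) :
    ∫ x in Ioi 0, (q + r * x ^ 2) * erf (a * x) * exp (-b * x ^ 2) =
      2 / √π * ∫ t in (0 : ℝ)..a, (q / (2 * (t ^ 2 + b)) + r / (2 * (t ^ 2 + b) ^ 2)) := by
  simp_rw [quadratic_mul_erf_mul_exp_neg_mul_sq q r _ b ha]
  rw [integral_const_mul, integral_Ioi_integral_erfKernel q r hb,
    intervalIntegral.integral_of_le ha]

theorem integral_div_add_div_sq_eq_arctan (s a : ℝ) :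
    ∫ t in (0 : ℝ)..a, ((1 - s) / (2 * (t ^ 2 + 1 / 2)) + s / (2 * (t ^ 2 + 1 / 2) ^ 2)) =
      arctan (√2 * a) / √2 + s / 2 * (a / (a ^ 2 + 1 / 2)) := by
  have hderiv : ∀ t ∈ uIcc 0 a,
      HasDerivAt (fun t => arctan (√2 * t) / √2 + s / 2 * (t / (t ^ 2 + 1 / 2)))
        ((1 - s) / (2 * (t ^ 2 + 1 / 2)) + s / (2 * (t ^ 2 + 1 / 2) ^ 2)) t := by
    intro t _
    have hc : t ^ 2 + 1 / 2 ≠ 0 := by positivity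
    have h2 : (√2) ^ 2 = 2 := sq_sqrt zero_le_two
    have := ((((hasDerivAt_id t).const_mul √2).arctan).div_const √2).add
      (((hasDerivAt_id t).div ((hasDerivAt_pow 2 t).add_const (1 / 2)) hc).const_mul (s / 2))
    refine this.congr_deriv ?_
    simp only [id, mul_pow, h2]
    field_simp
    ring
  have hcont : Continuous fun t : ℝ =>
      (1 - s) / (2 * (t ^ 2 + 1 / 2)) + s / (2 * (t ^ 2 + 1 / 2) ^ 2) := by
    fun_prop (disch := intro; positivity)
  rw [intervalIntegral.integral_eq_sub_of_hasDerivAt hderiv (hcont.intervalIntegrable _ _)]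
  simp

theorem mul_M1_mul_exp_neg_sq_div_two (s x : ℝ) (hx : x ≠ 0) (hs : s ≠ 1) :
    x * M1 s x * exp (-x ^ 2 / 2) =
      (1 - s + s * x ^ 2) * erf (√s / √(2 * (1 - s)) * x) * exp (-(1 / 2) * x ^ 2) +
        √(2 * s * (1 - s) / π) * (x * exp (-(1 / (2 * (1 - s))) * x ^ 2)) := by
  have hp : 1 - s ≠ 0 := sub_ne_zero.2 hs.symm
  have hexp : exp (-(s * x ^ 2) / (2 * (1 - s))) * exp (-(1 / 2) * x ^ 2) =
      exp (-(1 / (2 * (1 - s))) * x ^ 2) := by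
    rw [← exp_add]; congr 1; field_simp; ring
  rw [M1, ← hexp, show -x ^ 2 / 2 = -(1 / 2) * x ^ 2 by ring,
    show x * √s / √(2 * (1 - s)) = √s / √(2 * (1 - s)) * x by ring]
  field_simp

theorem stmt10 (s : ℝ) (hs : 0 < s) (hs1 : s < 1) :
    ∫ x in Ioi (0 : ℝ), x * M1 s x * Real.exp (-x ^ 2 / 2) =
      Real.sqrt (2 / π) * (Real.arctan (Real.sqrt (s / (1 - s))) + Real.sqrt (s * (1 - s))) := by
  have hp : 0 < 1 - s := sub_pos.2 hs1
  have ha : 0 ≤ √s / √(2 * (1 - s)) := by positivity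
  rw [setIntegral_congr_fun measurableSet_Ioi fun x hx =>
      mul_M1_mul_exp_neg_sq_div_two s x (ne_of_gt hx) hs1.ne,
    integral_add (integrableOn_quadratic_mul_erf_mul_exp_neg_mul_sq _ _ ha one_half_pos)
      ((integrable_mul_exp_neg_mul_sq (by positivity)).const_mul _).integrableOn,
    integral_Ioi_quadratic_mul_erf_mul_exp_neg_mul_sq _ _ ha one_half_pos,
    integral_div_add_div_sq_eq_arctan, integral_const_mul,
    integral_Ioi_mul_exp_neg_mul_sq (by positivity)]
  have hu : √s ^ 2 = s := sq_sqrt hs.le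
  have hv : √(1 - s) ^ 2 = 1 - s := sq_sqrt hp.le
  have hw : √2 ^ 2 = 2 := sq_sqrt zero_le_two
  have e1 : √(2 * (1 - s)) = √2 * √(1 - s) := sqrt_mul zero_le_two _
  have e2 : √(2 * s * (1 - s) / π) = √2 * √s * √(1 - s) / √π := by
    rw [sqrt_div' _ pi_pos.le, sqrt_mul (by positivity), sqrt_mul zero_le_two]
  rw [e1, e2, sqrt_div' _ pi_pos.le, sqrt_div' _ hp.le, sqrt_mul hs.le,
    show √2 * (√s / (√2 * √(1 - s))) = √s / √(1 - s) by field_simp]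
  generalize arctan (√s / √(1 - s)) = A
  field_simp
  rw [hu, hv, hw]
  ring
end
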